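/- arXiv:2402.04083 — 7 statements merged into one kernel-verified Lean document; each statement's English description precedes it below -/
import Mathlib

section
/- In the RS-game (N₀, v) corresponding to an RS-situation, every nonempty coalition T ⊆ N₀ with T ≠ {0} has positive value: v(T) > 0. -/
open Finset

/-- An RS-situation with `n` retailers; the supplier is treated separately.
`c` is the unit production cost, `w` the wholesale price function and
`p i` the expected price function of retailer `i`.  All price functions are
decreasing and continuous on `[0, ∞)`, `w` exceeds `c` everywhere,
`p i 0 > w 0` and `p i` reaches the value `c` at some positive quantity. -/
structure RSSituation (n : ℕ) where
  c : ℝ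
  w : ℝ → ℝ
  p : Fin n → ℝ → ℝ
  w_anti : ∀ ⦃q q' : ℝ⦄, 0 ≤ q → q ≤ q' → w q' ≤ w q
  w_cont : ContinuousOn w (Set.Ici 0)
  w_gt_c : ∀ q : ℝ, 0 ≤ q → c < w q
  p_anti : ∀ i : Fin n, ∀ ⦃q q' : ℝ⦄, 0 ≤ q → q ≤ q' → p i q' ≤ p i q
  p_cont : ∀ i : Fin n, ContinuousOn (p i) (Set.Ici 0)
  p_zero_gt : ∀ i : Fin n, w 0 < p i 0
  exists_eq_c : ∀ i : Fin n, ∃ q : ℝ, 0 < q ∧ p i q = c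

namespace RSSituation

variable {n : ℕ}

/-- The feasible set `Q^S ⊆ [0,∞)^S` of order vectors for a coalition `S` of retailers. -/
def QSet (R : RSSituation n) (S : Finset (Fin n)) : Set (S → ℝ) :=
  {q | ∀ i : S, 0 ≤ q i ∧ R.w (∑ j : S, q j) ≤ R.p i.1 (q i)}

/-- The joint profit `∑_{i ∈ S} (p_i(q_i) - w(q_S)) q_i` of a coalition `S` of retailers. -/
def coalProfit (R : RSSituation n) (S : Finset (Fin n)) (q : S → ℝ) : ℝ :=
  ∑ i : S, (R.p i.1 (q i) - R.w (∑ j : S, q j)) * q i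

/-- `q` is an optimal order vector for the coalition `S` of retailers. -/
def IsCoalOpt (R : RSSituation n) (S : Finset (Fin n)) (q : S → ℝ) : Prop :=
  q ∈ R.QSet S ∧ ∀ q' ∈ R.QSet S, R.coalProfit S q' ≤ R.coalProfit S q

/-- The feasible set of order quantities of retailer `i` at unit price `c`. -/
def QcSet (R : RSSituation n) (i : Fin n) : Set ℝ :=
  {q | 0 ≤ q ∧ R.c ≤ R.p i q}

/-- The profit `(p_i(q) - c) q` of retailer `i` at unit price `c`. -/
def indProfit (R : RSSituation n) (i : Fin n) (q : ℝ) : ℝ :=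
  (R.p i q - R.c) * q

/-- `q` is an optimal order quantity for retailer `i` at unit price `c`. -/
def IsIndOpt (R : RSSituation n) (i : Fin n) (q : ℝ) : Prop :=
  q ∈ R.QcSet i ∧ ∀ q' ∈ R.QcSet i, R.indProfit i q' ≤ R.indProfit i q

/-- `v` is the RS-game determined by chosen optimal order vectors `qS S`
(for each retailer coalition `S`) and `qc i` (for each retailer `i`, when
cooperating with the supplier).  Players: `none` is the supplier `0`,
`some i` is retailer `i`. -/
def IsRSGame (R : RSSituation n) (qS : (S : Finset (Fin n)) → (S → ℝ))
    (qc : Fin n → ℝ) (v : Finset (Option (Fin n)) → ℝ) : Prop :=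
  v ∅ = 0 ∧ v {none} = 0 ∧
    (∀ S : Finset (Fin n), S.Nonempty → v (S.image some) = R.coalProfit S (qS S)) ∧
    (∀ S : Finset (Fin n), S.Nonempty →
      v (insert none (S.image some)) = ∑ i ∈ S, R.indProfit i (qc i))

/-- The core of a TU game on the player set `N₀ = Option (Fin n)`. -/
def core (v : Finset (Option (Fin n)) → ℝ) : Set (Option (Fin n) → ℝ) :=
  {x | ∑ i : Option (Fin n), x i = v Finset.univ ∧
    ∀ T : Finset (Option (Fin n)), v T ≤ ∑ i ∈ T, x i}

end RSSituation

/-!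
By continuity, for small `t > 0` every retailer's price `p i t` still exceeds `w 0`, hence
`w (|S| t)`, and `c`. So ordering the constant quantity `t` is feasible and strictly profitable
for every coalition of retailers and for every retailer buying at cost `c`, and optimal orders
do at least as well.
-/

open Filter Topology

namespace RSSituation

variable {n : ℕ} (R : RSSituation n)

theorem eventually_lt_p_of_lt_p_zero (i : Fin n) {a : ℝ} (ha : a < R.p i 0) :
    ∀ᶠ t in 𝓝[>] 0, a < R.p i t :=
  ((R.p_cont i 0 Set.self_mem_Ici).mono Set.Ioi_subset_Ici_self).eventually_const_lt ha

theorem exists_pos_forall_w_zero_lt_p : ∃ t : ℝ, 0 < t ∧ ∀ i, R.w 0 < R.p i t :=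
  ((eventually_all.2 fun i => R.eventually_lt_p_of_lt_p_zero i (R.p_zero_gt i)).and
    self_mem_nhdsWithin).exists.imp fun _ ht => ⟨ht.2, ht.1⟩

theorem coalProfit_pos_of_isCoalOpt {S : Finset (Fin n)} (hS : S.Nonempty) {q : S → ℝ}
    (hq : R.IsCoalOpt S q) : 0 < R.coalProfit S q := by
  obtain ⟨t, ht, hpt⟩ := R.exists_pos_forall_w_zero_lt_p
  have hw : R.w (∑ _j : S, t) ≤ R.w 0 := R.w_anti le_rfl (sum_nonneg fun _ _ => ht.le)
  have hfeas : (fun _ : S => t) ∈ R.QSet S := fun i => ⟨ht.le, hw.trans (hpt i).le⟩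
  have hprofit : 0 < R.coalProfit S (fun _ : S => t) := by
    have : Nonempty S := hS.to_subtype
    exact sum_pos (fun i _ => mul_pos (by linarith [hpt i]) ht) univ_nonempty
  exact hprofit.trans_le (hq.2 _ hfeas)

theorem indProfit_pos_of_isIndOpt {i : Fin n} {q : ℝ} (hq : R.IsIndOpt i q) :
    0 < R.indProfit i q := by
  have hc : R.c < R.p i 0 := (R.w_gt_c 0 le_rfl).trans (R.p_zero_gt i)
  obtain ⟨t, hct, ht : 0 < t⟩ :=
    ((R.eventually_lt_p_of_lt_p_zero i hc).and self_mem_nhdsWithin).exists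
  have hprofit : 0 < R.indProfit i t := mul_pos (by linarith) ht
  exact hprofit.trans_le (hq.2 _ ⟨ht.le, hct.le⟩)

end RSSituation

/-- In an RS-game, every nonempty coalition other than `{0}` (the supplier
alone) has positive value. -/
theorem rs_game_positive_values (n : ℕ) (R : RSSituation n)
    (qS : (S : Finset (Fin n)) → (S → ℝ)) (qc : Fin n → ℝ)
    (hqS : ∀ S : Finset (Fin n), S.Nonempty → R.IsCoalOpt S (qS S))
    (hqc : ∀ i : Fin n, R.IsIndOpt i (qc i))
    (v : Finset (Option (Fin n)) → ℝ) (hv : R.IsRSGame qS qc v)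
    (T : Finset (Option (Fin n))) (hT : T.Nonempty) (hT0 : T ≠ {none}) :
    0 < v T := by
  obtain ⟨-, -, hv_retailers, hv_with_supplier⟩ := hv
  set S : Finset (Fin n) := T.eraseNone
  have hS_image : S.image some = T.erase none := image_some_eraseNone T
  by_cases hnone : none ∈ T
  · have hT_nontrivial : T.Nontrivial := by
      rcases hT.exists_eq_singleton_or_nontrivial with ⟨a, rfl⟩ | h
      · rw [mem_singleton] at hnone
        exact absurd (hnone ▸ rfl) hT0
      · exact h
    have hS : S.Nonempty := image_nonempty.1 (hS_image ▸ (erase_nonempty hnone).2 hT_nontrivial)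
    rw [← insert_erase hnone, ← hS_image, hv_with_supplier S hS]
    exact sum_pos (fun i _ => R.indProfit_pos_of_isIndOpt (hqc i)) hS
  · have hT_eq : S.image some = T := hS_image.trans (erase_eq_of_notMem hnone)
    have hS : S.Nonempty := image_nonempty.1 (hT_eq ▸ hT)
    rw [← hT_eq, hv_retailers S hS]
    exact R.coalProfit_pos_of_isCoalOpt hS (hqS S hS)
end

section
/- The RS-game (N₀, v) corresponding to an RS-situation is superadditive: for all disjoint coalitions S, T ⊆ N₀, v(S ∪ T) ≥ v(S) + v(T). -/
open Finset

/-!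
Two disjoint retailer coalitions can always place their optimal orders jointly: the total quantity
only grows, so the wholesale price only drops, the joint order stays feasible and each retailer
earns at least as much as before. A coalition containing the supplier buys at cost `c < w`, so
adding retailers to it gains at least what they would have earned on their own.
-/

theorem Equiv.sum_piFinsetUnion {ι β M : Type*} [DecidableEq ι] [AddCommMonoid M]
    {A B : Finset ι} (hd : Disjoint A B) (qA : A → β) (qB : B → β) (f : ι → β → M) :
    ∑ j : ↥(A ∪ B), f j (Equiv.piFinsetUnion (fun _ => β) hd (qA, qB) j) =
      ∑ j : A, f j (qA j) + ∑ j : B, f j (qB j) := by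
  rw [← (Equiv.Finset.union A B hd).sum_comp, Fintype.sum_sum_type]
  simp [Equiv.piFinsetUnion_left, Equiv.piFinsetUnion_right]

theorem Finset.eq_image_some_eraseNone {α : Type*} [DecidableEq α] {U : Finset (Option α)}
    (h : none ∉ U) : U = U.eraseNone.image some := by
  rw [image_some_eraseNone, erase_eq_of_notMem h]

theorem Finset.eq_insert_none_image_some_eraseNone {α : Type*} [DecidableEq α]
    {U : Finset (Option α)} (h : none ∈ U) : U = insert none (U.eraseNone.image some) := by
  rw [image_some_eraseNone, insert_erase h]

namespace RSSituation

variable {n : ℕ} (R : RSSituation n)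

theorem sum_nonneg_of_mem_QSet {S : Finset (Fin n)} {q : S → ℝ} (hq : q ∈ R.QSet S) :
    0 ≤ ∑ j : S, q j :=
  Fintype.sum_nonneg fun i => (hq i).1

theorem coalProfit_le_sum_sub_mul {S : Finset (Fin n)} {q : S → ℝ} (hq : ∀ i, 0 ≤ q i) {W : ℝ}
    (hW : W ≤ R.w (∑ j : S, q j)) :
    R.coalProfit S q ≤ ∑ i : S, (R.p i (q i) - W) * q i :=
  sum_le_sum fun i _ => mul_le_mul_of_nonneg_right (by linarith) (hq i)

theorem coalProfit_le_sum_indProfit {qc : Fin n → ℝ} (hqc : ∀ i, R.IsIndOpt i (qc i))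
    {S : Finset (Fin n)} {q : S → ℝ} (hq : q ∈ R.QSet S) :
    R.coalProfit S q ≤ ∑ i ∈ S, R.indProfit i (qc i) := by
  have hc : R.c ≤ R.w (∑ j : S, q j) := (R.w_gt_c _ (R.sum_nonneg_of_mem_QSet hq)).le
  calc R.coalProfit S q ≤ ∑ i : S, R.indProfit i (q i) :=
        R.coalProfit_le_sum_sub_mul (fun i => (hq i).1) hc
    _ ≤ ∑ i : S, R.indProfit i (qc i) :=
        sum_le_sum fun i _ => (hqc i).2 _ ⟨(hq i).1, hc.trans (hq i).2⟩
    _ = ∑ i ∈ S, R.indProfit i (qc i) := sum_coe_sort S fun i => R.indProfit i (qc i)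

section Join

variable {A B : Finset (Fin n)} (hd : Disjoint A B) {qA : A → ℝ} {qB : B → ℝ}
  (hA : qA ∈ R.QSet A) (hB : qB ∈ R.QSet B)

local notation "qAB" => Equiv.piFinsetUnion (fun _ => ℝ) hd (qA, qB)

include hA hB in
theorem w_sum_piFinsetUnion_le :
    R.w (∑ j, qAB j) ≤ R.w (∑ j : A, qA j) ∧ R.w (∑ j, qAB j) ≤ R.w (∑ j : B, qB j) := by
  have hsA := R.sum_nonneg_of_mem_QSet hA
  have hsB := R.sum_nonneg_of_mem_QSet hB
  rw [Equiv.sum_piFinsetUnion hd qA qB fun _ x => x]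
  exact ⟨R.w_anti hsA (by linarith), R.w_anti hsB (by linarith)⟩

include hA hB in
theorem piFinsetUnion_mem_QSet : qAB ∈ R.QSet (A ∪ B) := by
  obtain ⟨hwA, hwB⟩ := R.w_sum_piFinsetUnion_le hd hA hB
  rintro ⟨i, hi⟩
  rcases mem_union.mp hi with hiA | hiB
  · rw [Equiv.piFinsetUnion_left _ hd hiA]
    exact ⟨(hA ⟨i, hiA⟩).1, hwA.trans (hA ⟨i, hiA⟩).2⟩
  · rw [Equiv.piFinsetUnion_right _ hd hiB]
    exact ⟨(hB ⟨i, hiB⟩).1, hwB.trans (hB ⟨i, hiB⟩).2⟩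

include hA hB in
theorem coalProfit_add_le_coalProfit_piFinsetUnion :
    R.coalProfit A qA + R.coalProfit B qB ≤ R.coalProfit (A ∪ B) qAB := by
  obtain ⟨hwA, hwB⟩ := R.w_sum_piFinsetUnion_le hd hA hB
  refine (add_le_add (R.coalProfit_le_sum_sub_mul (fun i => (hA i).1) hwA)
    (R.coalProfit_le_sum_sub_mul (fun i => (hB i).1) hwB)).trans_eq ?_
  exact (Equiv.sum_piFinsetUnion hd qA qB fun i x => (R.p i x - R.w (∑ j, qAB j)) * x).symm

end Join

variable {R} in
theorem IsCoalOpt.coalProfit_add_le {A B : Finset (Fin n)} (hd : Disjoint A B)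
    {qA : A → ℝ} {qB : B → ℝ} {q : ↥(A ∪ B) → ℝ} (hA : R.IsCoalOpt A qA) (hB : R.IsCoalOpt B qB)
    (hAB : R.IsCoalOpt (A ∪ B) q) :
    R.coalProfit A qA + R.coalProfit B qB ≤ R.coalProfit (A ∪ B) q :=
  (R.coalProfit_add_le_coalProfit_piFinsetUnion hd hA.1 hB.1).trans
    (hAB.2 _ (R.piFinsetUnion_mem_QSet hd hA.1 hB.1))

namespace IsRSGame

variable {R} {qS : (S : Finset (Fin n)) → (S → ℝ)} {qc : Fin n → ℝ}
  {v : Finset (Option (Fin n)) → ℝ} (hv : R.IsRSGame qS qc v)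

include hv

theorem apply_insert_none (S : Finset (Fin n)) :
    v (insert none (S.image some)) = ∑ i ∈ S, R.indProfit i (qc i) := by
  rcases S.eq_empty_or_nonempty with rfl | hS
  · simpa using hv.2.1
  · exact hv.2.2.2 S hS

theorem add_le_image_union (hqS : ∀ S : Finset (Fin n), S.Nonempty → R.IsCoalOpt S (qS S))
    {S T : Finset (Fin n)} (hd : Disjoint S T) :
    v (S.image some) + v (T.image some) ≤ v ((S ∪ T).image some) := by
  rcases S.eq_empty_or_nonempty with rfl | hS
  · simp [hv.1]
  rcases T.eq_empty_or_nonempty with rfl | hT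
  · simp [hv.1]
  have hST : (S ∪ T).Nonempty := hS.mono subset_union_left
  rw [hv.2.2.1 S hS, hv.2.2.1 T hT, hv.2.2.1 _ hST]
  exact (hqS S hS).coalProfit_add_le hd (hqS T hT) (hqS _ hST)

theorem add_le_insert_none_image_union
    (hqS : ∀ S : Finset (Fin n), S.Nonempty → R.IsCoalOpt S (qS S))
    (hqc : ∀ i : Fin n, R.IsIndOpt i (qc i)) {S T : Finset (Fin n)} (hd : Disjoint S T) :
    v (insert none (S.image some)) + v (T.image some) ≤
      v (insert none ((S ∪ T).image some)) := by
  rw [hv.apply_insert_none, hv.apply_insert_none, sum_union hd]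
  rcases T.eq_empty_or_nonempty with rfl | hT
  · simp [hv.1]
  rw [hv.2.2.1 T hT]
  exact add_le_add_right (R.coalProfit_le_sum_indProfit hqc (hqS T hT).1) _

end IsRSGame

end RSSituation

/-- RS-games are superadditive. -/
theorem rs_game_superadditive (n : ℕ) (R : RSSituation n)
    (qS : (S : Finset (Fin n)) → (S → ℝ)) (qc : Fin n → ℝ)
    (hqS : ∀ S : Finset (Fin n), S.Nonempty → R.IsCoalOpt S (qS S))
    (hqc : ∀ i : Fin n, R.IsIndOpt i (qc i))
    (v : Finset (Option (Fin n)) → ℝ) (hv : R.IsRSGame qS qc v) :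
    ∀ S T : Finset (Option (Fin n)), Disjoint S T → v S + v T ≤ v (S ∪ T) := by
  intro S T hST
  wlog hT : none ∉ T generalizing S T
  · have hS : none ∉ S := fun hS => disjoint_left.mp hST hS (not_not.mp hT)
    simpa only [union_comm, add_comm] using this T S hST.symm hS
  rw [eq_image_some_eraseNone hT] at hST ⊢
  by_cases hS : none ∈ S
  · rw [eq_insert_none_image_some_eraseNone hS] at hST ⊢
    rw [disjoint_insert_left, disjoint_image (Option.some_injective _)] at hST
    rw [insert_union, ← image_union]
    exact hv.add_le_insert_none_image_union hqS hqc hST.2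
  · rw [eq_image_some_eraseNone hS] at hST ⊢
    rw [disjoint_image (Option.some_injective _)] at hST
    rw [← image_union]
    exact hv.add_le_image_union hqS hST
end

section
/- In the RS-game (N₀, v) corresponding to an RS-situation, superadditivity is strict when the coalition containing the supplier merges with a nonempty coalition of retailers: for every nonempty S ⊆ N and every nonempty T ⊆ N with S ∩ T = ∅, v(S₀ ∪ T) > v(S₀) + v(T). -/
open Finset

/-- Each retailer's optimal individual profit is strictly positive. -/
lemma ind_profit_pos {n : ℕ} (R : RSSituation n) (qc : Fin n → ℝ)
    (hqc : ∀ i : Fin n, R.IsIndOpt i (qc i)) (i : Fin n) :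
    0 < R.indProfit i (qc i) := by
  -- find q > 0 with p i q > c, using continuity at 0 and p i 0 > w 0 > c
  have hc0 : R.c < R.p i 0 := lt_trans (R.w_gt_c 0 le_rfl) (R.p_zero_gt i)
  have hcont : ContinuousWithinAt (R.p i) (Set.Ici 0) 0 :=
    R.p_cont i 0 (le_refl (0:ℝ))
  have hev : ∀ᶠ q in nhdsWithin 0 (Set.Ici 0), R.c < R.p i q :=
    hcont.eventually_const_lt hc0
  have hev' : ∀ᶠ q in nhdsWithin 0 (Set.Ioi 0), R.c < R.p i q :=
    hev.filter_mono (nhdsWithin_mono 0 Set.Ioi_subset_Ici_self)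
  obtain ⟨q, hq⟩ := (hev'.and (eventually_mem_nhdsWithin)).exists
  obtain ⟨hpq, hq0⟩ := hq
  have hq0' : 0 < q := hq0
  have hmem : q ∈ R.QcSet i := ⟨le_of_lt hq0', le_of_lt hpq⟩
  have hpos : 0 < R.indProfit i q :=
    mul_pos (sub_pos.mpr hpq) hq0'
  exact lt_of_lt_of_le hpos ((hqc i).2 q hmem)

/-- The coalitional profit of a nonempty retailer coalition is strictly below
the sum of the members' optimal individual profits at unit price `c`. -/
lemma coal_lt_ind {n : ℕ} (R : RSSituation n) (T : Finset (Fin n)) (hT : T.Nonempty)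
    (q : T → ℝ) (hq : q ∈ R.QSet T) (qc : Fin n → ℝ)
    (hqc : ∀ i : Fin n, R.IsIndOpt i (qc i)) :
    R.coalProfit T q < ∑ i ∈ T, R.indProfit i (qc i) := by
  have hQ0 : (0:ℝ) ≤ ∑ j : T, q j :=
    Finset.sum_nonneg fun j _ => (hq j).1
  have hcw : R.c < R.w (∑ j : T, q j) := R.w_gt_c _ hQ0
  have hsum : ∑ i ∈ T, R.indProfit i (qc i) = ∑ i : T, R.indProfit i.1 (qc i.1) :=
    (Finset.sum_coe_sort T fun i => R.indProfit i (qc i)).symm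
  rw [RSSituation.coalProfit, hsum]
  have hne : (Finset.univ : Finset T).Nonempty := by
    obtain ⟨x, hx⟩ := hT
    exact ⟨⟨x, hx⟩, Finset.mem_univ _⟩
  refine Finset.sum_lt_sum_of_nonempty hne fun i _ => ?_
  rcases eq_or_lt_of_le (hq i).1 with h0 | h0
  · rw [← h0, mul_zero]
    exact ind_profit_pos R qc hqc i.1
  · have h1 : (R.p i.1 (q i) - R.w (∑ j : T, q j)) * q i
        < (R.p i.1 (q i) - R.c) * q i := by
      apply mul_lt_mul_of_pos_right _ h0
      linarith
    have hmem : q i ∈ R.QcSet i.1 :=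
      ⟨(hq i).1, le_trans (le_of_lt hcw) (hq i).2⟩
    exact lt_of_lt_of_le h1 ((hqc i.1).2 (q i) hmem)

/-- In an RS-game, superadditivity is strict when a coalition containing the
supplier merges with a disjoint nonempty coalition of retailers. -/
theorem rs_game_strict_superadditive_with_supplier (n : ℕ) (R : RSSituation n)
    (qS : (S : Finset (Fin n)) → (S → ℝ)) (qc : Fin n → ℝ)
    (hqS : ∀ S : Finset (Fin n), S.Nonempty → R.IsCoalOpt S (qS S))
    (hqc : ∀ i : Fin n, R.IsIndOpt i (qc i))
    (v : Finset (Option (Fin n)) → ℝ) (hv : R.IsRSGame qS qc v) :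
    ∀ S T : Finset (Fin n), S.Nonempty → T.Nonempty → Disjoint S T →
      v (insert none (S.image some)) + v (T.image some) <
        v (insert none ((S ∪ T).image some)) := by
  intro S T hS hT hST
  obtain ⟨-, -, hvT, hvS0⟩ := hv
  rw [hvS0 S hS, hvT T hT, hvS0 (S ∪ T) (hS.mono Finset.subset_union_left),
    Finset.sum_union hST]
  have := coal_lt_ind R T hT (qS T) ((hqS T hT).1) qc hqc
  linarith
end

section
/- The RS-game (N₀, v) corresponding to an RS-situation is strictly monotone increasing: for all coalitions S ⊊ T ⊆ N₀ such that T contains at least one retailer (T ∩ N ≠ ∅), v(S) < v(T). -/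
open Finset

/-! A retailer `j` joining a coalition of retailers can order a small `t > 0` with
`p j t > w 0` (continuity and `p j 0 > w 0`); the larger joint order only lowers the wholesale
price paid by the old members, so the coalition's value rises strictly. With the supplier the
retailers buy at the unit cost `c < w`, so each retailer earns strictly more than in any
coalition of retailers alone, even one who orders nothing there, since a small positive order at
cost `c` is already profitable. -/

open Function Filter Topology

lemma Finset.eraseNone_ssubset_eraseNone {α : Type*} {S T : Finset (Option α)} (hST : S ⊂ T)
    (hnone : none ∈ T → none ∈ S) : S.eraseNone ⊂ T.eraseNone := by
  obtain ⟨x, hxT, hxS⟩ := exists_of_ssubset hST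
  cases x with
  | none => exact absurd (hnone hxT) hxS
  | some a =>
    exact ssubset_iff_of_subset (eraseNone.monotone hST.subset) |>.2
      ⟨a, mem_eraseNone.2 hxT, mt mem_eraseNone.1 hxS⟩

namespace RSSituation

variable {n : ℕ} (R : RSSituation n)

lemma exists_pos_lt_p (i : Fin n) {a : ℝ} (ha : a < R.p i 0) : ∃ t, 0 < t ∧ a < R.p i t := by
  have hlim : Tendsto (R.p i) (𝓝[>] 0) (𝓝 (R.p i 0)) :=
    ((R.p_cont i) 0 Set.self_mem_Ici).tendsto.mono_left
      (nhdsWithin_mono _ Set.Ioi_subset_Ici_self)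
  exact ((eventually_mem_nhdsWithin).and (hlim.eventually (eventually_gt_nhds ha))).exists

lemma w_lt_p_zero (i : Fin n) {q : ℝ} (hq : 0 ≤ q) : R.w q < R.p i 0 :=
  (R.w_anti le_rfl hq).trans_lt (R.p_zero_gt i)

variable {R}

lemma indProfit_pos {i : Fin n} {y : ℝ} (hy : R.IsIndOpt i y) : 0 < R.indProfit i y := by
  obtain ⟨t, ht, hpt⟩ := R.exists_pos_lt_p i ((R.w_gt_c 0 le_rfl).trans (R.p_zero_gt i))
  exact (mul_pos (sub_pos.2 hpt) ht).trans_le (hy.2 t ⟨ht.le, hpt.le⟩)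

lemma mul_sub_lt_indProfit {i : Fin n} {x y w : ℝ} (hy : R.IsIndOpt i y) (hw : R.c < w)
    (hx : 0 ≤ x) (hpx : w ≤ R.p i x) : (R.p i x - w) * x < R.indProfit i y := by
  rcases hx.eq_or_lt with rfl | hx
  · simpa using indProfit_pos hy
  · exact (mul_lt_mul_of_pos_right (sub_lt_sub_left hw _) hx).trans_le
      (hy.2 x ⟨hx.le, hw.le.trans hpx⟩)

lemma sum_indProfit_lt_of_ssubset {qc : Fin n → ℝ} (hqc : ∀ i, R.IsIndOpt i (qc i))
    {A B : Finset (Fin n)} (hAB : A ⊂ B) :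
    ∑ i ∈ A, R.indProfit i (qc i) < ∑ i ∈ B, R.indProfit i (qc i) := by
  obtain ⟨j, hjB, hjA⟩ := exists_of_ssubset hAB
  exact sum_lt_sum_of_subset hAB.subset hjB hjA (indProfit_pos (hqc j))
    fun i _ _ => (indProfit_pos (hqc i)).le

variable (R)

lemma coalProfit_restrict (S : Finset (Fin n)) (x : Fin n → ℝ) :
    R.coalProfit S (S.restrict x) = ∑ i ∈ S, (R.p i (x i) - R.w (∑ j ∈ S, x j)) * x i := by
  simp only [coalProfit, Finset.restrict, sum_coe_sort S x,
    sum_coe_sort S fun i => (R.p i (x i) - R.w (∑ j ∈ S, x j)) * x i]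

lemma restrict_mem_QSet_iff {S : Finset (Fin n)} {x : Fin n → ℝ} :
    S.restrict x ∈ R.QSet S ↔ ∀ i ∈ S, 0 ≤ x i ∧ R.w (∑ j ∈ S, x j) ≤ R.p i (x i) := by
  simp only [QSet, Set.mem_ofPred_eq, Finset.restrict, sum_coe_sort S x, Subtype.forall]

variable {R}

lemma exists_restrict_eq {S : Finset (Fin n)} (q : S → ℝ) :
    ∃ x : Fin n → ℝ, S.restrict x = q ∧ ∀ i ∉ S, x i = 0 :=
  ⟨extend Subtype.val q (0 : Fin n → ℝ),
    funext fun i => Subtype.val_injective.extend_apply q 0 i,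
    fun i hi => extend_apply' q (0 : Fin n → ℝ) i fun ⟨j, hj⟩ => hi (hj ▸ j.2)⟩

section Superset

variable {A B : Finset (Fin n)} {x : Fin n → ℝ}

lemma coalProfit_restrict_of_subset (hAB : A ⊆ B) (hx : ∀ i ∈ B, i ∉ A → x i = 0) :
    R.coalProfit B (B.restrict x) = R.coalProfit A (A.restrict x) := by
  rw [coalProfit_restrict, coalProfit_restrict, ← sum_subset hAB hx]
  exact (sum_subset hAB fun i hiB hiA => by simp [hx i hiB hiA]).symm

lemma restrict_mem_QSet_of_subset (hAB : A ⊆ B) (hx : ∀ i ∈ B, i ∉ A → x i = 0)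
    (hxA : A.restrict x ∈ R.QSet A) : B.restrict x ∈ R.QSet B := by
  rw [restrict_mem_QSet_iff] at hxA ⊢
  rw [← sum_subset hAB hx]
  have hsum : 0 ≤ ∑ j ∈ A, x j := sum_nonneg fun j hj => (hxA j hj).1
  intro i hiB
  by_cases hiA : i ∈ A
  · exact hxA i hiA
  · rw [hx i hiB hiA]
    exact ⟨le_rfl, (R.w_lt_p_zero i hsum).le⟩

end Superset

lemma exists_update_coalProfit_lt {A : Finset (Fin n)} {j : Fin n} (hj : j ∉ A)
    {x : Fin n → ℝ} (hx : A.restrict x ∈ R.QSet A) :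
    ∃ t, (insert j A).restrict (update x j t) ∈ R.QSet (insert j A) ∧
      R.coalProfit A (A.restrict x) <
        R.coalProfit (insert j A) ((insert j A).restrict (update x j t)) := by
  rw [restrict_mem_QSet_iff] at hx
  obtain ⟨t, ht, hpt⟩ := R.exists_pos_lt_p j (R.p_zero_gt j)
  refine ⟨t, ?_⟩
  set Q := ∑ i ∈ A, x i
  have hQ : 0 ≤ Q := sum_nonneg fun i hi => (hx i hi).1
  have hupdate : ∀ i ∈ A, update x j t i = x i := fun i hi =>
    update_of_ne (ne_of_mem_of_not_mem hi hj) t x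
  have hsum : ∑ i ∈ insert j A, update x j t i = t + Q := by
    rw [sum_insert hj, update_self, sum_congr rfl hupdate]
  have hwQ : R.w (t + Q) ≤ R.w Q := R.w_anti hQ (le_add_of_nonneg_left ht.le)
  have hwj : R.w (t + Q) < R.p j t := (R.w_anti le_rfl (by positivity)).trans_lt hpt
  constructor
  · rw [restrict_mem_QSet_iff, hsum, forall_mem_insert, update_self]
    refine ⟨⟨ht.le, hwj.le⟩, fun i hi => ?_⟩
    rw [hupdate i hi]
    exact ⟨(hx i hi).1, hwQ.trans (hx i hi).2⟩
  · have hterms : ∑ i ∈ A, (R.p i (update x j t i) - R.w (t + Q)) * update x j t i =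
        ∑ i ∈ A, (R.p i (x i) - R.w (t + Q)) * x i :=
      sum_congr rfl fun i hi => by rw [hupdate i hi]
    rw [coalProfit_restrict, coalProfit_restrict, hsum, sum_insert hj, update_self, hterms]
    have hgain : ∑ i ∈ A, (R.p i (x i) - R.w Q) * x i ≤
        ∑ i ∈ A, (R.p i (x i) - R.w (t + Q)) * x i :=
      sum_le_sum fun i hi => mul_le_mul_of_nonneg_right (by linarith) (hx i hi).1
    linarith [mul_pos (sub_pos.2 hwj) ht]

lemma exists_mem_QSet_coalProfit_lt {A B : Finset (Fin n)} (hAB : A ⊂ B) {q : A → ℝ}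
    (hq : q ∈ R.QSet A) : ∃ q' ∈ R.QSet B, R.coalProfit A q < R.coalProfit B q' := by
  obtain ⟨j, hjB, hjA⟩ := exists_of_ssubset hAB
  obtain ⟨x, rfl, hx⟩ := exists_restrict_eq q
  obtain ⟨t, hfeas, hlt⟩ := exists_update_coalProfit_lt hjA hq
  have hjAB : insert j A ⊆ B := insert_subset hjB hAB.subset
  have hzero : ∀ i ∈ B, i ∉ insert j A → update x j t i = 0 := fun i _ hi => by
    rw [mem_insert, not_or] at hi
    rw [update_of_ne hi.1, hx i hi.2]
  exact ⟨_, restrict_mem_QSet_of_subset hjAB hzero hfeas,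
    hlt.trans_eq (coalProfit_restrict_of_subset hjAB hzero).symm⟩

lemma coalProfit_lt_sum_indProfit {qc : Fin n → ℝ} (hqc : ∀ i, R.IsIndOpt i (qc i))
    {S B : Finset (Fin n)} (hSB : S ⊆ B) (hB : B.Nonempty) {q : S → ℝ} (hq : q ∈ R.QSet S) :
    R.coalProfit S q < ∑ i ∈ B, R.indProfit i (qc i) := by
  obtain ⟨x, rfl, -⟩ := exists_restrict_eq q
  rw [restrict_mem_QSet_iff] at hq
  rw [coalProfit_restrict]
  rcases S.eq_empty_or_nonempty with rfl | hS
  · simpa using sum_pos (fun i _ => indProfit_pos (hqc i)) hB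
  have hwc : R.c < R.w (∑ j ∈ S, x j) := R.w_gt_c _ (sum_nonneg fun j hj => (hq j hj).1)
  calc ∑ i ∈ S, (R.p i (x i) - R.w (∑ j ∈ S, x j)) * x i
      < ∑ i ∈ S, R.indProfit i (qc i) :=
        sum_lt_sum_of_nonempty hS fun i hi =>
          mul_sub_lt_indProfit (hqc i) hwc (hq i hi).1 (hq i hi).2
    _ ≤ ∑ i ∈ B, R.indProfit i (qc i) :=
        sum_le_sum_of_subset_of_nonneg hSB fun i _ _ => (indProfit_pos (hqc i)).le

namespace IsRSGame

variable {qS : (S : Finset (Fin n)) → (S → ℝ)} {qc : Fin n → ℝ} {v : Finset (Option (Fin n)) → ℝ}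

lemma apply_of_none_notMem (hv : R.IsRSGame qS qc v) {T : Finset (Option (Fin n))}
    (hT : none ∉ T) : v T = R.coalProfit T.eraseNone (qS T.eraseNone) := by
  have hTeq : T.eraseNone.image some = T := by rw [image_some_eraseNone, erase_eq_of_notMem hT]
  rcases T.eraseNone.eq_empty_or_nonempty with hempty | hne
  · have : IsEmpty T.eraseNone := isEmpty_coe_sort.2 hempty
    rw [coalProfit, Fintype.sum_empty, ← hTeq, hempty, image_empty, hv.1]
  · rw [← hv.2.2.1 _ hne, hTeq]

lemma apply_of_none_mem (hv : R.IsRSGame qS qc v) {T : Finset (Option (Fin n))}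
    (hT : none ∈ T) : v T = ∑ i ∈ T.eraseNone, R.indProfit i (qc i) := by
  have hTeq : insert none (T.eraseNone.image some) = T := by
    rw [image_some_eraseNone, insert_erase hT]
  rcases T.eraseNone.eq_empty_or_nonempty with hempty | hne
  · rw [hempty, sum_empty, ← hTeq, hempty, image_empty, insert_empty]
    exact hv.2.1
  · rw [← hv.2.2.2 _ hne, hTeq]

end IsRSGame

end RSSituation

/-- RS-games are strictly monotone increasing (for strict inclusions whose
larger coalition contains at least one retailer). -/
theorem rs_game_strict_monotone (n : ℕ) (R : RSSituation n)
    (qS : (S : Finset (Fin n)) → (S → ℝ)) (qc : Fin n → ℝ)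
    (hqS : ∀ S : Finset (Fin n), S.Nonempty → R.IsCoalOpt S (qS S))
    (hqc : ∀ i : Fin n, R.IsIndOpt i (qc i))
    (v : Finset (Option (Fin n)) → ℝ) (hv : R.IsRSGame qS qc v) :
    ∀ S T : Finset (Option (Fin n)), S ⊂ T → (∃ i : Fin n, some i ∈ T) →
      v S < v T := by
  have hfeas : ∀ A, qS A ∈ R.QSet A := fun A =>
    A.eq_empty_or_nonempty.elim (fun h => h ▸ fun i => isEmptyElim i) fun h => (hqS A h).1
  intro S T hST ⟨i, hi⟩
  have hT : T.eraseNone.Nonempty := ⟨i, mem_eraseNone.2 hi⟩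
  by_cases hnT : none ∈ T
  · rw [hv.apply_of_none_mem hnT]
    by_cases hnS : none ∈ S
    · rw [hv.apply_of_none_mem hnS]
      exact RSSituation.sum_indProfit_lt_of_ssubset hqc
        (eraseNone_ssubset_eraseNone hST fun _ => hnS)
    · rw [hv.apply_of_none_notMem hnS]
      exact RSSituation.coalProfit_lt_sum_indProfit hqc (eraseNone.monotone hST.subset) hT
        (hfeas _)
  · have hnS : none ∉ S := fun h => hnT (hST.subset h)
    rw [hv.apply_of_none_notMem hnS, hv.apply_of_none_notMem hnT]
    obtain ⟨q, hq, hlt⟩ :=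
      RSSituation.exists_mem_QSet_coalProfit_lt
        (eraseNone_ssubset_eraseNone hST (absurd · hnT)) (hfeas _)
    exact hlt.trans_le ((hqS _ hT).2 q hq)
end

section
/- In an RS-situation, for every retailer i ∈ N there exists a price w_i^* ∈ [c, p_i(q_i^c)] such that (p_i(q_i^c) − w_i^*)·q_i^c ≥ (p_i(q_i^S) − w(q_S^S))·q_i^S for every coalition S ⊆ N with i ∈ S. -/
open Finset

/-- For every retailer `i` there is a price `w_i^* ∈ [c, p_i(q_i^c)]` such
that retailer `i`'s profit at quantity `q_i^c` and price `w_i^*` dominates its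
profit in any coalition `S ∋ i` of retailers. -/
theorem rs_exists_wholesale_price (n : ℕ) (R : RSSituation n)
    (qS : (S : Finset (Fin n)) → (S → ℝ)) (qc : Fin n → ℝ)
    (hqS : ∀ S : Finset (Fin n), S.Nonempty → R.IsCoalOpt S (qS S))
    (hqc : ∀ i : Fin n, R.IsIndOpt i (qc i)) :
    ∀ i : Fin n, ∃ wstar ∈ Set.Icc R.c (R.p i (qc i)),
      ∀ (S : Finset (Fin n)) (hi : i ∈ S),
        (R.p i (qS S ⟨i, hi⟩) - R.w (∑ j : S, qS S j)) * qS S ⟨i, hi⟩ ≤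
          (R.p i (qc i) - wstar) * qc i := by
  intro i
  refine ⟨R.c, ⟨le_refl _, ((hqc i).1).2⟩, ?_⟩
  intro S hi
  have hne : S.Nonempty := ⟨i, hi⟩
  have hmem := (hqS S hne).1 ⟨i, hi⟩
  set q := qS S ⟨i, hi⟩ with hq
  have hq0 : 0 ≤ q := hmem.1
  have hsum0 : 0 ≤ ∑ j : S, qS S j :=
    Finset.sum_nonneg fun j _ => ((hqS S hne).1 j).1
  have hcw : R.c < R.w (∑ j : S, qS S j) := R.w_gt_c _ hsum0
  have h1 : (R.p i q - R.w (∑ j : S, qS S j)) * q ≤ (R.p i q - R.c) * q :=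
    mul_le_mul_of_nonneg_right (by linarith) hq0
  have hqmem : q ∈ R.QcSet i := ⟨hq0, le_trans hcw.le hmem.2⟩
  have h2 := (hqc i).2 q hqmem
  simpa [RSSituation.indProfit] using le_trans h1 h2
end

section
/- For the RS-game (N₀, v) corresponding to an RS-situation, a vector x ∈ ℝ^{N₀} belongs to Core(N₀, v) if and only if there exists a price vector w^* ∈ ℝ^N with w_i^* ≥ c for all i ∈ N and ∑_{i∈S} (p_i(q_i^c) − w_i^*)·q_i^c ≥ v(S) for every nonempty coalition S ⊆ N, such that x_0 = ∑_{i∈N} (w_i^* − c)·q_i^c and x_i = (p_i(q_i^c) − w_i^*)·q_i^c for every i ∈ N. -/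
/-!
A coalition containing the supplier earns the sum of its retailers' stand-alone profits
`(p_i(q_i^c) - c) q_i^c`. Given efficiency, its excess is the total slack of the retailers
outside it, so these core constraints reduce to `x_i ≤ (p_i(q_i^c) - c) q_i^c` for each
retailer. As `p_i(0) > c`, every `q_i^c` is positive, so these payoffs are exactly
`(p_i(q_i^c) - w_i^*) q_i^c` with `w_i^* ≥ c`, and efficiency leaves the supplier
`∑ (w_i^* - c) q_i^c`.
-/

open Finset

open Topology

namespace RSSituation

variable {n : ℕ}

section Core

variable {v : Finset (Option (Fin n)) → ℝ} {a : Fin n → ℝ} {x : Option (Fin n) → ℝ}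

lemma sum_image_some (S : Finset (Fin n)) (x : Option (Fin n) → ℝ) :
    ∑ k ∈ S.image some, x k = ∑ i ∈ S, x (some i) :=
  sum_image (Option.some_injective _).injOn

lemma sum_insert_none_image_some (S : Finset (Fin n)) (x : Option (Fin n) → ℝ) :
    ∑ k ∈ insert none (S.image some), x k = x none + ∑ i ∈ S, x (some i) := by
  rw [sum_insert (by simp), sum_image_some]

lemma univ_option_eq_insert_none_image_some :
    (univ : Finset (Option (Fin n))) = insert none (univ.image some) := by
  ext k; cases k <;> simp

lemma sum_insert_none_image_some_sub_eq_sum_compl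
    (heff : x none + ∑ i, x (some i) = ∑ i, a i) (S : Finset (Fin n)) :
    ∑ k ∈ insert none (S.image some), x k - ∑ i ∈ S, a i =
      ∑ i ∈ Sᶜ, (a i - x (some i)) := by
  rw [sum_insert_none_image_some, sum_sub_distrib]
  have hx := sum_add_sum_compl S (fun i => x (some i))
  have ha := sum_add_sum_compl S a
  linarith

theorem mem_core_iff (hv0 : v ∅ = 0)
    (hvN : ∀ S : Finset (Fin n), v (insert none (S.image some)) = ∑ i ∈ S, a i) :
    x ∈ core v ↔ x none + ∑ i, x (some i) = ∑ i, a i ∧ (∀ i, x (some i) ≤ a i) ∧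
      ∀ S : Finset (Fin n), S.Nonempty → v (S.image some) ≤ ∑ i ∈ S, x (some i) := by
  have hv_univ : v univ = ∑ i, a i := by rw [univ_option_eq_insert_none_image_some, hvN]
  have hsum_univ : ∑ k, x k = x none + ∑ i, x (some i) := by
    rw [univ_option_eq_insert_none_image_some, sum_insert_none_image_some]
  simp only [core, Set.mem_ofPred_eq, hsum_univ, hv_univ]
  constructor
  · rintro ⟨heff, hcore⟩
    refine ⟨heff, fun i => ?_, fun S _ => sum_image_some S x ▸ hcore _⟩
    have hexcess := sum_insert_none_image_some_sub_eq_sum_compl heff {i}ᶜ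
    rw [compl_compl, sum_singleton] at hexcess
    linarith [hvN {i}ᶜ ▸ hcore (insert none (({i}ᶜ : Finset (Fin n)).image some))]
  · rintro ⟨heff, hle, hcoal⟩
    refine ⟨heff, fun T => ?_⟩
    by_cases hT : none ∈ T
    · have hT_eq : T = insert none (T.eraseNone.image some) := by
        rw [image_some_eraseNone, insert_erase hT]
      have hexcess := sum_insert_none_image_some_sub_eq_sum_compl heff T.eraseNone
      rw [hT_eq, hvN]
      linarith [sum_nonneg fun i (_ : i ∈ T.eraseNoneᶜ) => sub_nonneg.2 (hle i)]
    · have hT_eq : T = T.eraseNone.image some := by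
        rw [image_some_eraseNone, erase_eq_of_notMem hT]
      rw [hT_eq, sum_image_some]
      rcases T.eraseNone.eq_empty_or_nonempty with hS | hS
      · simp [hS, hv0]
      · exact hcoal _ hS

end Core

lemma IsRSGame.value_insert_none {R : RSSituation n} {qS : (S : Finset (Fin n)) → (S → ℝ)}
    {qc : Fin n → ℝ} {v : Finset (Option (Fin n)) → ℝ} (hv : R.IsRSGame qS qc v)
    (S : Finset (Fin n)) :
    v (insert none (S.image some)) = ∑ i ∈ S, R.indProfit i (qc i) := by
  rcases S.eq_empty_or_nonempty with rfl | hS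
  · simpa using hv.2.1
  · exact hv.2.2.2 S hS

lemma c_lt_p_zero (R : RSSituation n) (i : Fin n) : R.c < R.p i 0 :=
  (R.w_gt_c 0 le_rfl).trans (R.p_zero_gt i)

/-- Since `p i 0 > c` and `p i` is continuous, small positive orders are profitable. -/
lemma exists_indProfit_pos (R : RSSituation n) (i : Fin n) :
    ∃ q ∈ R.QcSet i, 0 < R.indProfit i q := by
  have hnear : ∀ᶠ q in 𝓝[>] 0, R.c < R.p i q :=
    nhdsWithin_mono _ Set.Ioi_subset_Ici_self
      ((R.p_cont i 0 Set.self_mem_Ici).eventually (lt_mem_nhds (R.c_lt_p_zero i)))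
  obtain ⟨q, hpq, hq⟩ := (hnear.and self_mem_nhdsWithin).exists
  exact ⟨q, ⟨le_of_lt hq, hpq.le⟩, mul_pos (sub_pos.2 hpq) hq⟩

lemma IsIndOpt.pos {R : RSSituation n} {i : Fin n} {q : ℝ} (h : R.IsIndOpt i q) : 0 < q := by
  obtain ⟨q', hq', hprofit⟩ := R.exists_indProfit_pos i
  refine h.1.1.lt_of_ne fun hq => ?_
  have := h.2 q' hq'
  simp only [indProfit, ← hq, mul_zero] at this hprofit
  linarith

end RSSituation

lemma exists_ge_and_eq_sub_mul_iff {p c y q : ℝ} (hq : 0 < q) :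
    (∃ w, c ≤ w ∧ y = (p - w) * q) ↔ y ≤ (p - c) * q := by
  constructor
  · rintro ⟨w, hcw, rfl⟩
    exact mul_le_mul_of_nonneg_right (by linarith) hq.le
  · intro hy
    refine ⟨p - y / q, ?_, by field_simp; ring⟩
    rw [le_sub_iff_add_le, ← le_sub_iff_add_le', div_le_iff₀ hq]
    exact hy

theorem rs_game_core_characterization_general (n : ℕ) (R : RSSituation n)
    (qS : (S : Finset (Fin n)) → (S → ℝ)) (qc : Fin n → ℝ)
    (hqc : ∀ i : Fin n, R.IsIndOpt i (qc i))
    (v : Finset (Option (Fin n)) → ℝ) (hv : R.IsRSGame qS qc v)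
    (x : Option (Fin n) → ℝ) :
    x ∈ RSSituation.core v ↔
      ∃ wstar : Fin n → ℝ, (∀ i : Fin n, R.c ≤ wstar i) ∧
        (∀ S : Finset (Fin n), S.Nonempty →
          v (S.image some) ≤ ∑ i ∈ S, (R.p i (qc i) - wstar i) * qc i) ∧
        x none = ∑ i : Fin n, (wstar i - R.c) * qc i ∧
        ∀ i : Fin n, x (some i) = (R.p i (qc i) - wstar i) * qc i := by
  have hqc_pos i := (hqc i).pos
  have hsplit (wstar : Fin n → ℝ) : ∑ i, R.indProfit i (qc i) =
      ∑ i, (wstar i - R.c) * qc i + ∑ i, (R.p i (qc i) - wstar i) * qc i := by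
    rw [← sum_add_distrib]
    exact sum_congr rfl fun i _ => by rw [RSSituation.indProfit]; ring
  rw [RSSituation.mem_core_iff hv.1 hv.value_insert_none]
  constructor
  · rintro ⟨heff, hle, hcoal⟩
    choose wstar hcw hx using fun i => (exists_ge_and_eq_sub_mul_iff (hqc_pos i)).2 (hle i)
    simp only [hx] at heff hcoal
    exact ⟨wstar, hcw, hcoal, by linarith [hsplit wstar], hx⟩
  · rintro ⟨wstar, hcw, hcoal, hx0, hx⟩
    refine ⟨?_, fun i => (exists_ge_and_eq_sub_mul_iff (hqc_pos i)).1 ⟨wstar i, hcw i, hx i⟩, ?_⟩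
    · simp only [hx, hx0, hsplit wstar]
    · simpa only [hx] using hcoal

/-- Alternative description of the core of an RS-game: `x` is a core
allocation iff it arises from fixed wholesale prices `w^*` as in
Corollary `ws`: each retailer gets `(p_i(q_i^c) - w_i^*) q_i^c` and the
supplier gets `∑_i (w_i^* - c) q_i^c`. -/
theorem rs_game_core_characterization (n : ℕ) (R : RSSituation n)
    (qS : (S : Finset (Fin n)) → (S → ℝ)) (qc : Fin n → ℝ)
    (hqS : ∀ S : Finset (Fin n), S.Nonempty → R.IsCoalOpt S (qS S))
    (hqc : ∀ i : Fin n, R.IsIndOpt i (qc i))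
    (v : Finset (Option (Fin n)) → ℝ) (hv : R.IsRSGame qS qc v)
    (x : Option (Fin n) → ℝ) :
    x ∈ RSSituation.core v ↔
      ∃ wstar : Fin n → ℝ, (∀ i : Fin n, R.c ≤ wstar i) ∧
        (∀ S : Finset (Fin n), S.Nonempty →
          v (S.image some) ≤ ∑ i ∈ S, (R.p i (qc i) - wstar i) * qc i) ∧
        x none = ∑ i : Fin n, (wstar i - R.c) * qc i ∧
        ∀ i : Fin n, x (some i) = (R.p i (qc i) - wstar i) * qc i :=
  rs_game_core_characterization_general n R qS qc hqc v hv x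
end

section
/- For the RS-game (N₀, v) corresponding to an RS-situation, a vector x ∈ ℝ^{N₀} satisfies the four properties (EF) ∑_{i∈N₀} x_i = v(N₀); (SR) ∑_{i∈S} x_i ≥ v(S) for every coalition S ⊆ N; (RR) for every i ∈ N there exists a nonempty coalition S^i ⊆ N with x_i = v({0, i}) − (v(S^i₀) − v(S^i))/|S^i|; and (PD) x_i − x_j = v({0, i}) − v({0, j}) for all distinct i, j ∈ N, if and only if x = ξ(v), i.e. x_0 = n·β and x_i = v({0, i}) − β for all i ∈ N, where β = min over nonempty S ⊆ N of (v(S₀) − v(S))/|S|. -/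
open Finset

/-! In an RS-game the supplier adds value only pair by pair: v(S₀) = ∑_{i ∈ S} v({0, i}).
So (PD) forces x_i = v({0, i}) - γ for a single γ, which (RR) makes one of the ratios
(v(S₀) - v(S))/|S|, whence β ≤ γ; and for such an x, (SR) at S says exactly
γ ≤ (v(S₀) - v(S))/|S|, whence γ ≤ β at a minimizing S. Finally (EF) gives x_0 = nβ. -/

theorem eq_sub_sub_of_sub_eq_sub {ι α : Type*} [AddCommGroup α] {x a : ι → α}
    (h : ∀ i j, i ≠ j → x i - x j = a i - a j) (i₀ i : ι) : x i = a i - (a i₀ - x i₀) := by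
  by_cases hi : i = i₀
  · rw [hi, sub_sub_cancel]
  · calc x i = (x i - x i₀) + x i₀ := (sub_add_cancel _ _).symm
      _ = (a i - a i₀) + x i₀ := by rw [h i i₀ hi]
      _ = a i - (a i₀ - x i₀) := by abel

section SupplierGame

variable {ι : Type*} [DecidableEq ι]

def IsSupplierAdditive (v : Finset (Option ι) → ℝ) : Prop :=
  ∀ S : Finset ι, v (insert none (S.image some)) = ∑ i ∈ S, v {none, some i}

noncomputable def supplierGainPerRetailer (v : Finset (Option ι) → ℝ) (S : Finset ι) : ℝ :=
  (v (insert none (S.image some)) - v (S.image some)) / (S.card : ℝ)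

variable {v : Finset (Option ι) → ℝ}

theorem IsSupplierAdditive.le_sum_sub_iff (hv : IsSupplierAdditive v) {S : Finset ι}
    (hS : S.Nonempty) (γ : ℝ) :
    v (S.image some) ≤ ∑ i ∈ S, (v {none, some i} - γ) ↔ γ ≤ supplierGainPerRetailer v S := by
  have hcard : (0 : ℝ) < S.card := by exact_mod_cast hS.card_pos
  rw [supplierGainPerRetailer, le_div_iff₀ hcard, hv S, sum_sub_distrib, sum_const, nsmul_eq_mul]
  constructor <;> intro h <;> linarith

theorem IsSupplierAdditive.forall_le_sum_sub_iff (hv : IsSupplierAdditive v) (hv₀ : v ∅ = 0)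
    (γ : ℝ) :
    (∀ S : Finset ι, v (S.image some) ≤ ∑ i ∈ S, (v {none, some i} - γ)) ↔
      ∀ S : Finset ι, S.Nonempty → γ ≤ supplierGainPerRetailer v S := by
  refine ⟨fun h S hS ↦ (hv.le_sum_sub_iff hS γ).1 (h S), fun h S ↦ ?_⟩
  rcases S.eq_empty_or_nonempty with rfl | hS
  · simp [hv₀]
  · exact (hv.le_sum_sub_iff hS γ).2 (h S hS)

theorem IsSupplierAdditive.sum_eq_iff [Fintype ι] (hv : IsSupplierAdditive v)
    {x : Option ι → ℝ} {γ : ℝ} (hx : ∀ i, x (some i) = v {none, some i} - γ) :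
    ∑ i, x i = v univ ↔ x none = Fintype.card ι * γ := by
  have huniv : (univ : Finset (Option ι)) = insert none ((univ : Finset ι).image some) := by
    ext o; cases o <;> simp
  rw [Fintype.sum_option, huniv, hv univ, sum_congr rfl fun i _ ↦ hx i, sum_sub_distrib,
    sum_const, card_univ, nsmul_eq_mul]
  constructor <;> intro h <;> linarith

end SupplierGame

theorem RSSituation.IsRSGame.isSupplierAdditive {n : ℕ} {R : RSSituation n}
    {qS : (S : Finset (Fin n)) → (S → ℝ)} {qc : Fin n → ℝ} {v : Finset (Option (Fin n)) → ℝ}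
    (hv : R.IsRSGame qS qc v) : IsSupplierAdditive v := by
  intro S
  rcases S.eq_empty_or_nonempty with rfl | hS
  · simpa using hv.2.1
  · rw [hv.2.2.2 S hS]
    exact sum_congr rfl fun i _ ↦ by simpa using (hv.2.2.2 {i} (singleton_nonempty i)).symm

theorem rs_game_mgpc_characterization_general (n : ℕ) (R : RSSituation n)
    (qS : (S : Finset (Fin n)) → (S → ℝ)) (qc : Fin n → ℝ)
    (v : Finset (Option (Fin n)) → ℝ) (hv : R.IsRSGame qS qc v)
    (β : ℝ)
    (hβ_mem : ∃ S : Finset (Fin n), S.Nonempty ∧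
      β = (v (insert none (S.image some)) - v (S.image some)) / (S.card : ℝ))
    (hβ_min : ∀ S : Finset (Fin n), S.Nonempty →
      β ≤ (v (insert none (S.image some)) - v (S.image some)) / (S.card : ℝ))
    (x : Option (Fin n) → ℝ) :
    ((∑ i : Option (Fin n), x i = v Finset.univ) ∧
     (∀ S : Finset (Fin n), v (S.image some) ≤ ∑ i ∈ S, x (some i)) ∧
     (∀ i : Fin n, ∃ S : Finset (Fin n), S.Nonempty ∧
        x (some i) = v {none, some i} -
          (v (insert none (S.image some)) - v (S.image some)) / (S.card : ℝ)) ∧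
     (∀ i j : Fin n, i ≠ j →
        x (some i) - x (some j) = v {none, some i} - v {none, some j})) ↔
      (x none = (n : ℝ) * β ∧
        ∀ i : Fin n, x (some i) = v {none, some i} - β) := by
  have hadd := hv.isSupplierAdditive
  obtain ⟨S', hS', hβS'⟩ := hβ_mem
  obtain ⟨i₀, -⟩ := id hS'
  constructor
  · rintro ⟨hEF, hSR, hRR, hPD⟩
    obtain ⟨T, hT, hxT⟩ := hRR i₀
    have hx : ∀ i, x (some i) = v {none, some i} - supplierGainPerRetailer v T := fun i ↦ by
      rw [eq_sub_sub_of_sub_eq_sub (x := fun i ↦ x (some i)) hPD i₀ i, hxT, sub_sub_cancel,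
        supplierGainPerRetailer]
    have hγ : supplierGainPerRetailer v T = β := by
      refine le_antisymm ?_ (hβ_min T hT)
      rw [hβS']
      exact (hadd.forall_le_sum_sub_iff hv.1 _).1 (by simpa only [hx] using hSR) S' hS'
    rw [hγ] at hx
    exact ⟨by simpa using (hadd.sum_eq_iff hx).1 hEF, hx⟩
  · rintro ⟨hx₀, hx⟩
    refine ⟨(hadd.sum_eq_iff hx).2 (by simpa using hx₀), ?_, fun i ↦ ⟨S', hS', hβS' ▸ hx i⟩,
      fun i j _ ↦ by rw [hx i, hx j]; ring⟩
    simpa only [hx] using (hadd.forall_le_sum_sub_iff hv.1 β).2 hβ_min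

/-- The mgpc-solution `ξ(v)` is the unique allocation satisfying efficiency
(EF), stability for retailers (SR), retailer reduction (RR) and preservation
of differences for retailers (PD). -/
theorem rs_game_mgpc_characterization (n : ℕ) (R : RSSituation n)
    (qS : (S : Finset (Fin n)) → (S → ℝ)) (qc : Fin n → ℝ)
    (hqS : ∀ S : Finset (Fin n), S.Nonempty → R.IsCoalOpt S (qS S))
    (hqc : ∀ i : Fin n, R.IsIndOpt i (qc i))
    (v : Finset (Option (Fin n)) → ℝ) (hv : R.IsRSGame qS qc v)
    (β : ℝ)
    (hβ_mem : ∃ S : Finset (Fin n), S.Nonempty ∧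
      β = (v (insert none (S.image some)) - v (S.image some)) / (S.card : ℝ))
    (hβ_min : ∀ S : Finset (Fin n), S.Nonempty →
      β ≤ (v (insert none (S.image some)) - v (S.image some)) / (S.card : ℝ))
    (x : Option (Fin n) → ℝ) :
    ((∑ i : Option (Fin n), x i = v Finset.univ) ∧
     (∀ S : Finset (Fin n), v (S.image some) ≤ ∑ i ∈ S, x (some i)) ∧
     (∀ i : Fin n, ∃ S : Finset (Fin n), S.Nonempty ∧
        x (some i) = v {none, some i} -
          (v (insert none (S.image some)) - v (S.image some)) / (S.card : ℝ)) ∧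
     (∀ i j : Fin n, i ≠ j →
        x (some i) - x (some j) = v {none, some i} - v {none, some j})) ↔
      (x none = (n : ℝ) * β ∧
        ∀ i : Fin n, x (some i) = v {none, some i} - β) :=
  rs_game_mgpc_characterization_general n R qS qc v hv β hβ_mem hβ_min x
end
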